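/- Let n ≥ 1 and let G : ℝⁿ → ℝ be smooth with Hessian a Killing tensor, i.e. ∂_c(∂_a∂_b G) + ∂_a(∂_b∂_c G) + ∂_b(∂_c∂_a G) = 0 for all a,b,c. Then for every twice-differentiable curve q : ℝ → ℝⁿ with q̈ = 0, the function I(t) = (t²/2) ∂_a∂_b G(q(t)) q̇^a q̇^b − t ∂_a G(q(t)) q̇^a + G(q(t)) is constant. -/

import Mathlib

/-- Partial derivative of a scalar field on ℝⁿ in the `a`-th coordinate direction. -/
noncomputable def pd {n : ℕ} (f : (Fin n → ℝ) → ℝ) (a : Fin n) (x : Fin n → ℝ) : ℝ :=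
  fderiv ℝ f x (Pi.single a 1)

/-- The Hessian `∂_a ∂_b G`. -/
noncomputable def hess {n : ℕ} (G : (Fin n → ℝ) → ℝ) (a b : Fin n)
    (x : Fin n → ℝ) : ℝ :=
  pd (fun y => pd G b y) a x

lemma pd_contDiff {n : ℕ} {f : (Fin n → ℝ) → ℝ} (hf : ContDiff ℝ (⊤ : ℕ∞) f) (a : Fin n) :
    ContDiff ℝ (⊤ : ℕ∞) (pd f a) :=
  (hf.fderiv_right (by simp)).clm_apply contDiff_const

lemma clm_apply_eq_sum {n : ℕ} (L : (Fin n → ℝ) →L[ℝ] ℝ) (v : Fin n → ℝ) :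
    L v = ∑ a, L (Pi.single a 1) * v a := by
  have hv : v = ∑ a, (v a) • (Pi.single a (1:ℝ) : Fin n → ℝ) := by
    funext j
    simp [Pi.single_apply, Finset.sum_apply, mul_comm]
  conv_lhs => rw [hv]
  rw [map_sum]
  simp [mul_comm]

lemma hasDerivAt_comp_pd {n : ℕ} {f : (Fin n → ℝ) → ℝ} (hf : ContDiff ℝ (⊤ : ℕ∞) f)
    {q : ℝ → Fin n → ℝ} {v : Fin n → ℝ} {t : ℝ} (hq : HasDerivAt q v t) :
    HasDerivAt (fun s => f (q s)) (∑ a, pd f a (q t) * v a) t := by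
  have hL := (hf.differentiable (by simp) (q t)).hasFDerivAt
  have h := hL.comp_hasDerivAt t hq
  have : fderiv ℝ f (q t) v = ∑ a, pd f a (q t) * v a := clm_apply_eq_sum _ v
  rwa [this] at h

theorem geodesic_time_dependent_integral {n : ℕ} (hn : 1 ≤ n)
    (G : (Fin n → ℝ) → ℝ) (hG : ContDiff ℝ (⊤ : ℕ∞) G)
    (hKT : ∀ x a b c, pd (fun y => hess G a b y) c x
        + pd (fun y => hess G b c y) a x + pd (fun y => hess G c a y) b x = 0)
    (q q' : ℝ → Fin n → ℝ)
    (hq : ∀ t, HasDerivAt q (q' t) t)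
    (hq' : ∀ t, HasDerivAt q' 0 t) :
    ∀ t₁ t₂ : ℝ,
      (t₁^2/2) * (∑ a, ∑ b, hess G a b (q t₁) * q' t₁ a * q' t₁ b)
        - t₁ * (∑ a, pd G a (q t₁) * q' t₁ a) + G (q t₁)
      = (t₂^2/2) * (∑ a, ∑ b, hess G a b (q t₂) * q' t₂ a * q' t₂ b)
        - t₂ * (∑ a, pd G a (q t₂) * q' t₂ a) + G (q t₂) := by
  have hvconst : ∀ t, q' t = q' 0 := fun t =>
    is_const_of_deriv_eq_zero (fun s => (hq' s).differentiableAt)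
      (fun s => (hq' s).deriv) t 0
  set v : Fin n → ℝ := q' 0 with hvdef
  have hqv : ∀ t, HasDerivAt q v t := fun t => (hvconst t) ▸ hq t
  have hpd : ∀ a : Fin n, ContDiff ℝ (⊤ : ℕ∞) (pd G a) := fun a => pd_contDiff hG a
  have hhess : ∀ a b : Fin n, ContDiff ℝ (⊤ : ℕ∞) (hess G a b) := fun a b =>
    pd_contDiff (hpd b) a
  set I : ℝ → ℝ := fun t => (t^2/2) * (∑ a, ∑ b, hess G a b (q t) * v a * v b)
      - t * (∑ a, pd G a (q t) * v a) + G (q t) with hIdef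
  have key : ∀ t, HasDerivAt I 0 t := by
    intro t
    have h0 : HasDerivAt (fun s => G (q s)) (∑ a, pd G a (q t) * v a) t :=
      hasDerivAt_comp_pd hG (hqv t)
    have h1 : ∀ a : Fin n, HasDerivAt (fun s => pd G a (q s))
        (∑ b, hess G b a (q t) * v b) t := fun a =>
      hasDerivAt_comp_pd (hpd a) (hqv t)
    have h2 : ∀ a b : Fin n, HasDerivAt (fun s => hess G a b (q s))
        (∑ c, pd (hess G a b) c (q t) * v c) t := fun a b =>
      hasDerivAt_comp_pd (hhess a b) (hqv t)
    have HS2 : HasDerivAt (fun s => ∑ a, ∑ b, hess G a b (q s) * v a * v b)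
        (∑ a, ∑ b, (∑ c, pd (hess G a b) c (q t) * v c) * v a * v b) t :=
      HasDerivAt.fun_sum fun a _ => HasDerivAt.fun_sum fun b _ =>
        ((h2 a b).mul_const (v a)).mul_const (v b)
    have HS1 : HasDerivAt (fun s => ∑ a, pd G a (q s) * v a)
        (∑ a, (∑ b, hess G b a (q t) * v b) * v a) t :=
      HasDerivAt.fun_sum fun a _ => (h1 a).mul_const (v a)
    have Hhalf : HasDerivAt (fun s : ℝ => s^2/2) ((2 * t ^ 1)/2) t :=
      (hasDerivAt_pow 2 t).div_const 2
    have HD := ((Hhalf.mul HS2).sub ((hasDerivAt_id t).mul HS1)).add h0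
    have hA : (∑ a, (∑ b, hess G b a (q t) * v b) * v a)
        = ∑ a, ∑ b, hess G a b (q t) * v a * v b := by
      calc (∑ a, (∑ b, hess G b a (q t) * v b) * v a)
          = ∑ a, ∑ b, hess G b a (q t) * v b * v a := by
            simp [Finset.sum_mul]
        _ = ∑ b, ∑ a, hess G b a (q t) * v b * v a := Finset.sum_comm
    have hB : (∑ a, ∑ b, (∑ c, pd (hess G a b) c (q t) * v c) * v a * v b) = 0 := by
      set F : Fin n → Fin n → Fin n → ℝ :=
        fun a b c => pd (hess G a b) c (q t) * v c * v a * v b with hF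
      have hLF : (∑ a, ∑ b, (∑ c, pd (hess G a b) c (q t) * v c) * v a * v b)
          = ∑ a, ∑ b, ∑ c, F a b c := by
        simp [Finset.sum_mul, hF]
      have cyc1 : (∑ a, ∑ b, ∑ c, F b c a) = ∑ a, ∑ b, ∑ c, F a b c :=
        calc (∑ a, ∑ b, ∑ c, F b c a) = ∑ b, ∑ a, ∑ c, F b c a := Finset.sum_comm
          _ = ∑ b, ∑ c, ∑ a, F b c a :=
            Finset.sum_congr rfl fun _ _ => Finset.sum_comm
      have cyc2 : (∑ a, ∑ b, ∑ c, F c a b) = ∑ a, ∑ b, ∑ c, F a b c :=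
        calc (∑ a, ∑ b, ∑ c, F c a b)
            = ∑ a, ∑ c, ∑ b, F c a b :=
              Finset.sum_congr rfl fun _ _ => Finset.sum_comm
          _ = ∑ c, ∑ a, ∑ b, F c a b := Finset.sum_comm
      have hzero : (∑ a, ∑ b, ∑ c, (F a b c + F b c a + F c a b)) = 0 := by
        apply Finset.sum_eq_zero; intro a _
        apply Finset.sum_eq_zero; intro b _
        apply Finset.sum_eq_zero; intro c _
        have hk := hKT (q t) a b c
        simp only [hF]
        linear_combination (v a * v b * v c) * hk
      have hsplit : (∑ a, ∑ b, ∑ c, (F a b c + F b c a + F c a b))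
          = (∑ a, ∑ b, ∑ c, F a b c) + (∑ a, ∑ b, ∑ c, F b c a)
            + (∑ a, ∑ b, ∑ c, F c a b) := by
        simp [Finset.sum_add_distrib]
      rw [hsplit, cyc1, cyc2] at hzero
      rw [hLF]; linarith
    have hDval : ((2 * t ^ 1)/2 * (∑ a, ∑ b, hess G a b (q t) * v a * v b)
        + t^2/2 * (∑ a, ∑ b, (∑ c, pd (hess G a b) c (q t) * v c) * v a * v b))
        - (1 * (∑ a, pd G a (q t) * v a)
            + t * (∑ a, (∑ b, hess G b a (q t) * v b) * v a))
        + (∑ a, pd G a (q t) * v a) = 0 := by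
      rw [hA, hB]; ring
    simp only [id_eq] at HD
    rw [hDval] at HD
    exact HD
  intro t₁ t₂
  have hc := is_const_of_deriv_eq_zero (fun s => (key s).differentiableAt)
    (fun s => (key s).deriv) t₁ t₂
  simp only [hIdef] at hc
  rw [hvconst t₁, hvconst t₂]
  exact hc
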